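/- Let 2 ≤ e ≤ m be integers and let S ∈ L(m,e). Then [S] ∩ C(m,e) = {φ(S)}; that is, φ(S) is the unique packed numerical semigroup T with multiplicity m and embedding dimension e satisfying φ(T) = φ(S). -/

import Mathlib

open scoped Pointwise

/-- A numerical semigroup: an additive submonoid of ℕ with finite complement. -/
def IsNumericalSemigroup (S : Set ℕ) : Prop :=
  0 ∈ S ∧ (∀ a ∈ S, ∀ b ∈ S, a + b ∈ S) ∧ Sᶜ.Finite

/-- Multiplicity: the least positive element. -/
noncomputable def mult (S : Set ℕ) : ℕ := sInf (S \ {0})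

/-- Minimal system of generators: (S∖{0}) ∖ ((S∖{0})+(S∖{0})). -/
def msg (S : Set ℕ) : Set ℕ := (S \ {0}) \ ((S \ {0}) + (S \ {0}))

/-- Embedding dimension: cardinality of the minimal system of generators. -/
noncomputable def edim (S : Set ℕ) : ℕ := (msg S).ncard

/-- The submonoid of (ℕ,+) generated by a set, as a set. -/
def genSet (B : Set ℕ) : Set ℕ := (AddSubmonoid.closure B : Set ℕ)

/-- Packed numerical semigroup: msg(S) ⊆ {m(S),…,2m(S)−1}. -/
def IsPacked (S : Set ℕ) : Prop := msg S ⊆ Set.Icc (mult S) (2 * mult S - 1)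

/-- L(m,e): numerical semigroups with multiplicity m and embedding dimension e. -/
def Lset (m e : ℕ) : Set (Set ℕ) :=
  {S | IsNumericalSemigroup S ∧ mult S = m ∧ edim S = e}

/-- C(m,e): packed numerical semigroups in L(m,e). -/
def Cset (m e : ℕ) : Set (Set ℕ) := {S ∈ Lset m e | IsPacked S}

/-- φ(S): the monoid generated by {m + (x mod m) : x ∈ msg(S)}, m = mult S. -/
noncomputable def phi (S : Set ℕ) : Set ℕ :=
  genSet ((fun x => mult S + x % mult S) '' msg S)

/-- The class [S] = {T ∈ L(m,e) : φ(T) = φ(S)}. -/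
def classOf (m e : ℕ) (S : Set ℕ) : Set (Set ℕ) := {T ∈ Lset m e | phi T = phi S}

/-- Frobenius number: the largest element of the complement. -/
noncomputable def Frob (S : Set ℕ) : ℕ := sSup Sᶜ

/-- Genus: the cardinality of the complement. -/
noncomputable def genus (S : Set ℕ) : ℕ := Sᶜ.ncard

/-- The Apéry set of n in S. -/
def Ap (S : Set ℕ) (n : ℕ) : Set ℕ := {s ∈ S | ¬ ∃ t ∈ S, s = t + n}

/-- Minimal elements of a set in a partial order. -/
def minimalsOf {β : Type*} [PartialOrder β] (X : Set β) : Set β :=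
  {x ∈ X | ∀ y ∈ X, y ≤ x → y = x}

/-! The generators `m + (x mod m)` of φ(S) lie in `[m, 2m - 1]`, where a sum of two nonzero elements
cannot land, so they are exactly the minimal generators of φ(S); they are pairwise distinct because
the minimal generators of S have pairwise distinct residues mod `m`. Hence φ(S) is packed with the
multiplicity and embedding dimension of S, and its complement is finite because `S ⊆ φ(S)`.
A packed semigroup is fixed by φ, so a packed `T` with `φ(T) = φ(S)` is `T = φ(T) = φ(S)`. -/

lemma mult_le {S : Set ℕ} {s : ℕ} (hs : s ∈ S) (hs0 : s ≠ 0) : mult S ≤ s :=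
  Nat.sInf_le ⟨hs, hs0⟩

lemma mem_genSet_of_mem {B : Set ℕ} {b : ℕ} (hb : b ∈ B) : b ∈ genSet B :=
  AddSubmonoid.subset_closure hb

lemma mem_of_le_of_modEq {M : AddSubmonoid ℕ} {m c x : ℕ} (hm : m ∈ M) (hc : c ∈ M)
    (hcx : c ≤ x) (hmod : c ≡ x [MOD m]) : x ∈ M := by
  obtain ⟨k, hk⟩ := (Nat.modEq_iff_dvd' hcx).mp hmod
  have hx : x = c + k • m := by rw [smul_eq_mul]; lia
  exact hx ▸ M.add_mem hc (M.nsmul_mem hm k)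

lemma eq_zero_or_le_of_mem_genSet {B : Set ℕ} {m : ℕ} (hB : ∀ b ∈ B, m ≤ b) {x : ℕ}
    (hx : x ∈ genSet B) : x = 0 ∨ m ≤ x := by
  induction hx using AddSubmonoid.closure_induction with
  | mem x hx => exact .inr (hB x hx)
  | zero => exact .inl rfl
  | add x y _ _ ihx ihy => omega

lemma msg_genSet_subset (B : Set ℕ) : msg (genSet B) ⊆ B := by
  have key : ∀ y ∈ genSet B,
      y = 0 ∨ y ∈ B ∨ y ∈ (genSet B \ {0}) + (genSet B \ {0}) := by
    intro y hy
    induction hy using AddSubmonoid.closure_induction with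
    | mem y hy => exact .inr (.inl hy)
    | zero => exact .inl rfl
    | add y z hy hz ihy ihz =>
      by_cases hy0 : y = 0
      · simpa only [hy0, zero_add] using ihz
      by_cases hz0 : z = 0
      · simpa only [hz0, add_zero] using ihy
      exact .inr (.inr (Set.add_mem_add ⟨hy, hy0⟩ ⟨hz, hz0⟩))
  rintro x ⟨⟨hxG, hx0⟩, hx_not_sum⟩
  rcases key x hxG with h | h | h
  · exact absurd h hx0
  · exact h
  · exact absurd h hx_not_sum

lemma msg_genSet_of_subset_Icc {B : Set ℕ} {m : ℕ} (hm : 0 < m)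
    (hB : B ⊆ Set.Icc m (2 * m - 1)) : msg (genSet B) = B := by
  refine (msg_genSet_subset B).antisymm fun b hb => ?_
  have hge (x : ℕ) (hx : x ∈ genSet B) : x = 0 ∨ m ≤ x :=
    eq_zero_or_le_of_mem_genSet (fun b hb => (hB hb).1) hx
  obtain ⟨hmb, hb2m⟩ := hB hb
  refine ⟨⟨mem_genSet_of_mem hb, show b ≠ 0 by omega⟩, ?_⟩
  intro hsum
  obtain ⟨x, ⟨hx, hx0⟩, y, ⟨hy, hy0⟩, rfl⟩ := Set.mem_add.mp hsum
  have := hge x hx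
  have := hge y hy
  simp only [Set.mem_singleton_iff] at hx0 hy0
  omega

lemma mult_genSet {B : Set ℕ} {m : ℕ} (hm : 0 < m) (hmB : m ∈ B) (hB : ∀ b ∈ B, m ≤ b) :
    mult (genSet B) = m := by
  refine le_antisymm (mult_le (mem_genSet_of_mem hmB) hm.ne') ?_
  refine le_csInf ⟨m, mem_genSet_of_mem hmB, hm.ne'⟩ ?_
  rintro x ⟨hx, hx0⟩
  have := eq_zero_or_le_of_mem_genSet hB hx
  simp only [Set.mem_singleton_iff] at hx0
  omega

lemma image_add_mod_subset_Icc {m : ℕ} (hm : 0 < m) (A : Set ℕ) :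
    (fun x => m + x % m) '' A ⊆ Set.Icc m (2 * m - 1) := by
  rintro _ ⟨x, -, rfl⟩
  have := Nat.mod_lt x hm
  simp only [Set.mem_Icc]
  constructor <;> omega

namespace IsNumericalSemigroup

variable {S : Set ℕ}

def toAddSubmonoid (hS : IsNumericalSemigroup S) : AddSubmonoid ℕ where
  carrier := S
  zero_mem' := hS.1
  add_mem' ha hb := hS.2.1 _ ha _ hb

lemma genSet_subset (hS : IsNumericalSemigroup S) {B : Set ℕ} (hB : B ⊆ S) : genSet B ⊆ S :=
  AddSubmonoid.closure_le (S := hS.toAddSubmonoid).mpr hB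

lemma nonempty_diff_zero (hS : IsNumericalSemigroup S) : (S \ {0}).Nonempty :=
  ((compl_compl S ▸ hS.2.2.infinite_compl).sdiff (Set.finite_singleton 0)).nonempty

lemma mult_mem (hS : IsNumericalSemigroup S) : mult S ∈ S \ {0} :=
  Nat.sInf_mem hS.nonempty_diff_zero

lemma mult_pos (hS : IsNumericalSemigroup S) : 0 < mult S :=
  Nat.pos_of_ne_zero hS.mult_mem.2

lemma mult_mem_msg (hS : IsNumericalSemigroup S) : mult S ∈ msg S := by
  refine ⟨hS.mult_mem, ?_⟩
  intro hsum
  obtain ⟨a, ⟨ha, ha0⟩, b, ⟨hb, hb0⟩, hab⟩ := Set.mem_add.mp hsum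
  have := mult_le ha ha0
  have := mult_le hb hb0
  have := hS.mult_pos
  omega

lemma genSet_msg (hS : IsNumericalSemigroup S) : genSet (msg S) = S := by
  refine (hS.genSet_subset fun x hx => hx.1.1).antisymm fun x hx => ?_
  induction x using Nat.strong_induction_on with
  | _ x ih =>
    by_cases hx0 : x = 0
    · exact hx0 ▸ (AddSubmonoid.closure _).zero_mem
    by_cases hxmsg : x ∈ msg S
    · exact mem_genSet_of_mem hxmsg
    obtain ⟨a, ⟨ha, ha0⟩, b, ⟨hb, hb0⟩, rfl⟩ :=
      Set.mem_add.mp (not_not.mp fun h => hxmsg ⟨⟨hx, hx0⟩, h⟩)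
    simp only [Set.mem_singleton_iff] at ha0 hb0
    exact (AddSubmonoid.closure _).add_mem (ih a (by omega) ha) (ih b (by omega) hb)

lemma msg_injOn_mod (hS : IsNumericalSemigroup S) : Set.InjOn (· % mult S) (msg S) := by
  intro x hx y hy hxy
  wlog hle : x ≤ y generalizing x y
  · exact (this hy hx hxy.symm (le_of_not_ge hle)).symm
  by_contra hne
  have hyx : y - x ∈ S :=
    mem_of_le_of_modEq (M := hS.toAddSubmonoid) hS.mult_mem.1 hS.1 (Nat.zero_le _)
      ((Nat.modEq_iff_dvd' hle).mp hxy |>.modEq_zero_nat.symm)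
  exact hy.2 (Set.mem_add.mpr ⟨x, hx.1, y - x, ⟨hyx, by simp only [Set.mem_singleton_iff]; omega⟩, by omega⟩)

lemma subset_phi (hS : IsNumericalSemigroup S) : S ⊆ phi S := by
  have hmsg : msg S ⊆ phi S := fun x hx => by
    have hm : mult S ≤ x := mult_le hx.1.1 hx.1.2
    have hmod_le : x % mult S ≤ x - mult S := Nat.mod_eq_sub_mod hm ▸ Nat.mod_le _ _
    refine mem_of_le_of_modEq (m := mult S) (c := mult S + x % mult S)
      (mem_genSet_of_mem ⟨mult S, hS.mult_mem_msg, by simp⟩) (mem_genSet_of_mem ⟨x, hx, rfl⟩)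
      (by omega) ?_
    simp [Nat.ModEq]
  calc S = genSet (msg S) := hS.genSet_msg.symm
    _ ⊆ phi S := AddSubmonoid.closure_le.mpr hmsg

lemma isNumericalSemigroup_phi (hS : IsNumericalSemigroup S) : IsNumericalSemigroup (phi S) :=
  ⟨(AddSubmonoid.closure _).zero_mem, fun _ ha _ hb => (AddSubmonoid.closure _).add_mem ha hb,
    hS.2.2.subset (Set.compl_subset_compl.mpr hS.subset_phi)⟩

lemma msg_phi (hS : IsNumericalSemigroup S) :
    msg (phi S) = (fun x => mult S + x % mult S) '' msg S :=
  msg_genSet_of_subset_Icc hS.mult_pos (image_add_mod_subset_Icc hS.mult_pos _)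

lemma mult_phi (hS : IsNumericalSemigroup S) : mult (phi S) = mult S :=
  mult_genSet hS.mult_pos ⟨mult S, hS.mult_mem_msg, by simp⟩
    fun _ hb => (image_add_mod_subset_Icc hS.mult_pos _ hb).1

lemma edim_phi (hS : IsNumericalSemigroup S) : edim (phi S) = edim S := by
  rw [edim, hS.msg_phi, Set.InjOn.ncard_image fun x hx y hy h =>
    hS.msg_injOn_mod hx hy (Nat.add_left_cancel h), edim]

lemma isPacked_phi (hS : IsNumericalSemigroup S) : IsPacked (phi S) := by
  rw [IsPacked, hS.msg_phi, hS.mult_phi]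
  exact image_add_mod_subset_Icc hS.mult_pos _

lemma phi_eq_self_of_isPacked (hS : IsNumericalSemigroup S) (hp : IsPacked S) : phi S = S := by
  have hfix : Set.EqOn (fun x => mult S + x % mult S) id (msg S) := fun x hx => by
    obtain ⟨h1, h2⟩ := hp hx
    have := hS.mult_pos
    simp only [id]
    rw [Nat.mod_eq_sub_mod h1, Nat.mod_eq_of_lt (by omega)]
    omega
  rw [phi, hfix.image_eq, Set.image_id, hS.genSet_msg]

end IsNumericalSemigroup

lemma phi_mem_Lset {m e : ℕ} {S : Set ℕ} (hS : S ∈ Lset m e) : phi S ∈ Lset m e :=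
  ⟨hS.1.isNumericalSemigroup_phi, hS.1.mult_phi.trans hS.2.1, hS.1.edim_phi.trans hS.2.2⟩

theorem stmt1_general (m e : ℕ) (S : Set ℕ) (hS : S ∈ Lset m e) :
    classOf m e S ∩ Cset m e = {phi S} := by
  have hphi : phi S ∈ Lset m e := phi_mem_Lset hS
  have hpacked : IsPacked (phi S) := hS.1.isPacked_phi
  ext T
  constructor
  · rintro ⟨⟨-, hTS⟩, hTL, hTp⟩
    exact (hTL.1.phi_eq_self_of_isPacked hTp).symm.trans hTS
  · rintro rfl
    exact ⟨⟨hphi, hphi.1.phi_eq_self_of_isPacked hpacked⟩, hphi, hpacked⟩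

/-- [S] ∩ C(m,e) = {φ(S)}. -/
theorem stmt1 (m e : ℕ) (h2 : 2 ≤ e) (hem : e ≤ m)
    (S : Set ℕ) (hS : S ∈ Lset m e) :
    classOf m e S ∩ Cset m e = {phi S} :=
  stmt1_general m e S hS
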